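/- Let H, Ĥ be symmetric positive semidefinite n×n matrices with decreasing eigenvalues λ_1 ≥ … ≥ λ_n and λ̂_1 ≥ … ≥ λ̂_n respectively, and let Û_r be a matrix whose orthonormal columns are eigenvectors of Ĥ for its r largest eigenvalues. Then tr(H) − tr(Û_rᵀ H Û_r) ≤ Σ_{j=r+1}^{n} λ_j + 2r ‖H − Ĥ‖_op. -/

import Mathlib

open Matrix
open scoped Matrix

/-- The operator (spectral) norm of a real square matrix. -/
noncomputable def matOpNorm {n : ℕ} (A : Matrix (Fin n) (Fin n) ℝ) : ℝ :=
  ‖Matrix.toEuclideanCLM (𝕜 := ℝ) A‖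

/-!
Write `E = H - Ĥ`, and let `Û` and `U` hold the leading `r` eigenvectors of `Ĥ` and of `H`.
Then `tr H - tr (Uᵀ H U)` is the tail `∑_{j ≥ r} λ_j`, and Ky Fan's maximum principle gives
`tr (Uᵀ Ĥ U) ≤ tr (Ûᵀ Ĥ Û)`; trading `Ĥ` for `H` on both sides costs
`|tr (Uᵀ E U)| + |tr (Ûᵀ E Û)| ≤ 2 r ‖E‖`.

Ky Fan: with `W = V̂ᵀ U`, `tr (Uᵀ Ĥ U) = ∑ λ̂_j s_j` for the diagonal `s_j` of the orthogonal
projection `W Wᵀ`, so `0 ≤ s_j ≤ 1` and `∑ s_j = r`; such a weighted sum of a decreasing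
sequence is at most the sum of its first `r` terms.
-/

open Finset

namespace Matrix

variable {l m n α : Type*}

theorem transpose_mul_mul_apply [Fintype n] [CommSemiring α] (U : Matrix n l α)
    (M : Matrix n n α) (W : Matrix n m α) (i : l) (j : m) :
    (Uᵀ * M * W) i j = Uᵀ i ⬝ᵥ M *ᵥ Wᵀ j := by
  rw [Matrix.mul_assoc]
  simp [mul_apply, dotProduct, mulVec]

theorem transpose_mul_self_apply [Fintype n] [CommSemiring α] (U : Matrix n m α) (i j : m) :
    (Uᵀ * U) i j = Uᵀ i ⬝ᵥ Uᵀ j := by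
  simp [mul_apply, dotProduct]

theorem transpose_submatrix_mul_mul_submatrix [Fintype n] [CommSemiring α] (V : Matrix n n α)
    (M : Matrix n n α) (e : m → n) :
    (V.submatrix id e)ᵀ * M * V.submatrix id e = (Vᵀ * M * V).submatrix e e := by
  ext i j
  rw [submatrix_apply, transpose_mul_mul_apply, transpose_mul_mul_apply]
  rfl

theorem trace_transpose_mul_diagonal_mul [Fintype m] [Fintype n] [DecidableEq n]
    [CommSemiring α] (d : n → α) (W : Matrix n m α) :
    (Wᵀ * diagonal d * W).trace = ∑ j, d j * (W * Wᵀ) j j := by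
  rw [Matrix.mul_assoc, trace_mul_comm, Matrix.mul_assoc]
  simp only [trace, diag_apply, diagonal_mul]

theorem diag_mem_Icc_of_isSymm_of_mul_self [Fintype n] [CommRing α] [LinearOrder α]
    [IsStrictOrderedRing α] {P : Matrix n n α} (hsymm : P.IsSymm)
    (hidem : P * P = P) (j : n) : P j j ∈ Set.Icc 0 1 := by
  have hsq : P j j * P j j ≤ P j j :=
    calc P j j * P j j ≤ ∑ k, P j k * P j k :=
          single_le_sum (f := fun k => P j k * P j k) (fun k _ => mul_self_nonneg _) (mem_univ j)
      _ = P j j := by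
          conv_rhs => rw [← hidem, mul_apply]
          exact sum_congr rfl fun k _ => by rw [hsymm.apply j k]
  constructor <;> nlinarith [mul_self_nonneg (P j j)]

section Orthogonal

variable [Fintype n] [DecidableEq n] [DecidableEq m] [CommSemiring α]

theorem transpose_submatrix_mul_submatrix_eq_one {V : Matrix n n α} (hV : Vᵀ * V = 1)
    {e : m → n} (he : Function.Injective e) :
    (V.submatrix id e)ᵀ * V.submatrix id e = 1 := by
  simpa [hV, submatrix_one e he] using transpose_submatrix_mul_mul_submatrix V 1 e

theorem transpose_submatrix_mul_conj_diagonal {V : Matrix n n α} (hV : Vᵀ * V = 1)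
    (d : n → α) {e : m → n} (he : Function.Injective e) :
    (V.submatrix id e)ᵀ * (V * diagonal d * Vᵀ) * V.submatrix id e = diagonal (d ∘ e) := by
  rw [transpose_submatrix_mul_mul_submatrix, ← submatrix_diagonal d e he]
  congr 1
  calc Vᵀ * (V * diagonal d * Vᵀ) * V = (Vᵀ * V) * diagonal d * (Vᵀ * V) := by
        simp only [Matrix.mul_assoc]
    _ = diagonal d := by rw [hV, Matrix.one_mul, Matrix.mul_one]

end Orthogonal

end Matrix

theorem abs_dotProduct_mulVec_le_matOpNorm {n : ℕ} (A : Matrix (Fin n) (Fin n) ℝ)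
    (x : Fin n → ℝ) : |x ⬝ᵥ A *ᵥ x| ≤ matOpNorm A * (x ⬝ᵥ x) := by
  set v : EuclideanSpace ℝ (Fin n) := WithLp.toLp 2 x
  have hv : ‖v‖ ^ 2 = x ⬝ᵥ x := by
    rw [← real_inner_self_eq_norm_sq, EuclideanSpace.inner_toLp_toLp]
    simp
  calc |x ⬝ᵥ A *ᵥ x| = |inner ℝ v (toEuclideanCLM (𝕜 := ℝ) A v)| := by
        rw [inner_toEuclideanCLM]
    _ ≤ ‖v‖ * ‖toEuclideanCLM (𝕜 := ℝ) A v‖ := abs_real_inner_le_norm _ _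
    _ ≤ ‖v‖ * (‖toEuclideanCLM (𝕜 := ℝ) A‖ * ‖v‖) := by
        gcongr
        exact ContinuousLinearMap.le_opNorm _ _
    _ = matOpNorm A * (x ⬝ᵥ x) := by rw [matOpNorm, ← hv]; ring

theorem abs_trace_transpose_mul_mul_le {n : ℕ} {m : Type*} [Fintype m] [DecidableEq m]
    (E : Matrix (Fin n) (Fin n) ℝ) {U : Matrix (Fin n) m ℝ} (hU : Uᵀ * U = 1) :
    |(Uᵀ * E * U).trace| ≤ Fintype.card m * matOpNorm E := by
  have hunit : ∀ i, Uᵀ i ⬝ᵥ Uᵀ i = 1 := fun i => by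
    rw [← transpose_mul_self_apply, hU, one_apply_eq]
  calc |(Uᵀ * E * U).trace| ≤ ∑ i, |(Uᵀ * E * U) i i| := abs_sum_le_sum_abs _ _
    _ ≤ ∑ _i : m, matOpNorm E := sum_le_sum fun i _ => by
        simpa [transpose_mul_mul_apply, hunit] using abs_dotProduct_mulVec_le_matOpNorm E (Uᵀ i)
    _ = Fintype.card m * matOpNorm E := by simp

theorem Fin.sum_castLE {M : Type*} [AddCommMonoid M] {n r : ℕ} (hr : r ≤ n) (f : Fin n → M) :
    ∑ i : Fin r, f (Fin.castLE hr i)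
      = ∑ j ∈ univ.filter (fun j : Fin n => (j : ℕ) < r), f j := by
  refine sum_nbij (Fin.castLE hr) (by simp) (Fin.castLE_injective hr).injOn ?_ (fun _ _ => rfl)
  intro j hj
  exact ⟨⟨j, (mem_filter.mp hj).2⟩, by simp, rfl⟩

theorem sum_mul_le_sum_filter_lt_of_antitone {R : Type*} [CommRing R] [LinearOrder R]
    [IsStrictOrderedRing R] {n r : ℕ} (hr : r ≤ n) {f s : Fin n → R} (hf : Antitone f)
    (hs : ∀ j, s j ∈ Set.Icc 0 1) (hsum : ∑ j, s j = r) :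
    ∑ j, f j * s j ≤ ∑ j ∈ univ.filter (fun j : Fin n => (j : ℕ) < r), f j := by
  obtain ⟨t, hlt, hge⟩ : ∃ t, (∀ j : Fin n, (j : ℕ) < r → t ≤ f j) ∧
      ∀ j : Fin n, r ≤ (j : ℕ) → f j ≤ t := by
    by_cases hrn : r < n
    · exact ⟨f ⟨r, hrn⟩, fun j hj => hf (Fin.mk_le_mk.mpr hj.le),
        fun j hj => hf (Fin.mk_le_mk.mpr hj)⟩
    · obtain ⟨t, ht⟩ := (Set.finite_range f).bddBelow
      exact ⟨t, fun j _ => ht ⟨j, rfl⟩, fun j hj => absurd (hj.trans_lt j.isLt) hrn⟩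
  set ind : Fin n → R := fun j => if (j : ℕ) < r then 1 else 0
  have hind : ∑ j, ind j = r := by
    simpa [ind, sum_ite] using (Fin.sum_castLE hr (fun _ => (1 : R))).symm
  have hterm : ∀ j, (f j - t) * (s j - ind j) ≤ 0 := fun j => by
    by_cases hj : (j : ℕ) < r
    · simp only [ind, hj, if_true]
      exact mul_nonpos_of_nonneg_of_nonpos (sub_nonneg.mpr (hlt j hj)) (by linarith [(hs j).2])
    · simp only [ind, hj, if_false, sub_zero]
      exact mul_nonpos_of_nonpos_of_nonneg (sub_nonpos.mpr (hge j (not_lt.mp hj))) (hs j).1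
  calc ∑ j, f j * s j
        = ∑ j, f j * ind j + ∑ j, (f j - t) * (s j - ind j)
          + t * (∑ j, s j - ∑ j, ind j) := by
          simp only [mul_sub, sub_mul, sum_sub_distrib, mul_sum]; ring
    _ ≤ ∑ j, f j * ind j := by
          rw [hsum, hind, sub_self, mul_zero]
          linarith [sum_nonpos (s := univ) fun j _ => hterm j]
    _ = ∑ j ∈ univ.filter (fun j : Fin n => (j : ℕ) < r), f j := by
          simp [ind, sum_filter]

theorem trace_transpose_mul_conj_diagonal_le_sum_filter_lt {R : Type*} [CommRing R]
    [LinearOrder R] [IsStrictOrderedRing R] {n r : ℕ} (hr : r ≤ n) {d : Fin n → R}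
    (hd : Antitone d) {V : Matrix (Fin n) (Fin n) R} (hV : Vᵀ * V = 1)
    {U : Matrix (Fin n) (Fin r) R} (hU : Uᵀ * U = 1) :
    (Uᵀ * (V * diagonal d * Vᵀ) * U).trace
      ≤ ∑ j ∈ univ.filter (fun j : Fin n => (j : ℕ) < r), d j := by
  set W := Vᵀ * U
  have hWW : Wᵀ * W = 1 := by
    calc Wᵀ * W = Uᵀ * (V * Vᵀ) * U := by simp only [W, transpose_mul, transpose_transpose,
          Matrix.mul_assoc]
      _ = 1 := by rw [mul_eq_one_comm.mp hV, Matrix.mul_one, hU]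
  have hconj : Uᵀ * (V * diagonal d * Vᵀ) * U = Wᵀ * diagonal d * W := by
    simp only [W, transpose_mul, transpose_transpose, Matrix.mul_assoc]
  have hproj : (W * Wᵀ) * (W * Wᵀ) = W * Wᵀ := by
    rw [Matrix.mul_assoc, ← Matrix.mul_assoc Wᵀ, hWW, Matrix.one_mul]
  have hsum : ∑ j, (W * Wᵀ) j j = r := by
    change (W * Wᵀ).trace = r
    rw [trace_mul_comm, hWW, trace_one, Fintype.card_fin]
  rw [hconj, trace_transpose_mul_diagonal_mul]
  exact sum_mul_le_sum_filter_lt_of_antitone hr hd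
    (diag_mem_Icc_of_isSymm_of_mul_self (transpose_mul W Wᵀ) hproj) hsum

theorem trace_conj_submatrix_castLE {R : Type*} [CommRing R] {n r : ℕ} (hr : r ≤ n)
    (d : Fin n → R) {V : Matrix (Fin n) (Fin n) R} (hV : Vᵀ * V = 1) :
    ((V.submatrix id (Fin.castLE hr))ᵀ * (V * diagonal d * Vᵀ)
        * V.submatrix id (Fin.castLE hr)).trace
      = ∑ j ∈ univ.filter (fun j : Fin n => (j : ℕ) < r), d j := by
  rw [transpose_submatrix_mul_conj_diagonal hV d (Fin.castLE_injective hr), trace_diagonal]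
  exact Fin.sum_castLE hr d

theorem trace_sampling_error_bound_general {n r : ℕ} (hr : r ≤ n)
    (H Hhat : Matrix (Fin n) (Fin n) ℝ)
    (lam lamhat : Fin n → ℝ) (hlamhat : Antitone lamhat)
    (V Vhat : Matrix (Fin n) (Fin n) ℝ)
    (hV : Vᵀ * V = 1) (hHeig : H = V * Matrix.diagonal lam * Vᵀ)
    (hVhat : Vhatᵀ * Vhat = 1) (hHhateig : Hhat = Vhat * Matrix.diagonal lamhat * Vhatᵀ) :
    H.trace -
        ((Vhat.submatrix id (Fin.castLE hr))ᵀ * H * (Vhat.submatrix id (Fin.castLE hr))).trace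
      ≤ (∑ j ∈ Finset.univ.filter (fun j : Fin n => r ≤ (j : ℕ)), lam j)
          + 2 * (r : ℝ) * matOpNorm (H - Hhat) := by
  set Uhat := Vhat.submatrix id (Fin.castLE hr)
  set U := V.submatrix id (Fin.castLE hr)
  have hUhat : Uhatᵀ * Uhat = 1 :=
    transpose_submatrix_mul_submatrix_eq_one hVhat (Fin.castLE_injective hr)
  have hU : Uᵀ * U = 1 := transpose_submatrix_mul_submatrix_eq_one hV (Fin.castLE_injective hr)
  have htrace : H.trace = ∑ j ∈ univ.filter (fun j : Fin n => (j : ℕ) < r), lam j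
      + ∑ j ∈ univ.filter (fun j : Fin n => r ≤ (j : ℕ)), lam j := by
    rw [hHeig, trace_mul_cycle, hV, Matrix.one_mul, trace_diagonal]
    simpa only [not_lt] using
      (sum_filter_add_sum_filter_not univ (fun j : Fin n => (j : ℕ) < r) lam).symm
  have htop :
      (Uᵀ * H * U).trace = ∑ j ∈ univ.filter (fun j : Fin n => (j : ℕ) < r), lam j := by
    rw [hHeig, trace_conj_submatrix_castLE hr lam hV]
  have hKyFan : (Uᵀ * Hhat * U).trace ≤ (Uhatᵀ * Hhat * Uhat).trace := by
    rw [hHhateig, trace_conj_submatrix_castLE hr lamhat hVhat]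
    exact trace_transpose_mul_conj_diagonal_le_sum_filter_lt hr hlamhat hVhat hU
  have hErr := abs_le.mp (abs_trace_transpose_mul_mul_le (H - Hhat) hU)
  have hErrhat := abs_le.mp (abs_trace_transpose_mul_mul_le (H - Hhat) hUhat)
  simp only [Matrix.mul_sub, Matrix.sub_mul, trace_sub, Fintype.card_fin] at hErr hErrhat
  linarith

/-- Sampling-error bound: if `Û_r` consists of orthonormal eigenvectors of `Ĥ` for its `r`
largest eigenvalues, then
`tr(H) − tr(Û_rᵀ H Û_r) ≤ ∑_{j ≥ r} λ_j + 2 r ‖H − Ĥ‖_op`,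
where `λ_1 ≥ … ≥ λ_n` are the eigenvalues of `H`. -/
theorem trace_sampling_error_bound {n r : ℕ} (hr : r ≤ n)
    (H Hhat : Matrix (Fin n) (Fin n) ℝ) (hH : H.PosSemidef) (hHhat : Hhat.PosSemidef)
    (lam lamhat : Fin n → ℝ) (hlam : Antitone lam) (hlamhat : Antitone lamhat)
    (V Vhat : Matrix (Fin n) (Fin n) ℝ)
    (hV : Vᵀ * V = 1) (hHeig : H = V * Matrix.diagonal lam * Vᵀ)
    (hVhat : Vhatᵀ * Vhat = 1) (hHhateig : Hhat = Vhat * Matrix.diagonal lamhat * Vhatᵀ) :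
    H.trace -
        ((Vhat.submatrix id (Fin.castLE hr))ᵀ * H * (Vhat.submatrix id (Fin.castLE hr))).trace
      ≤ (∑ j ∈ Finset.univ.filter (fun j : Fin n => r ≤ (j : ℕ)), lam j)
          + 2 * (r : ℝ) * matOpNorm (H - Hhat) :=
  trace_sampling_error_bound_general hr H Hhat lam lamhat hlamhat V Vhat hV hHeig hVhat hHhateig
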